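/- Every unitary PMV-algebra is a PMV_f-algebra. Precisely: let A be an MV-algebra with an associative, commutative product · such that a·u = a and a·(b ⊖ c) = a·b ⊖ a·c for all a, b, c ∈ A. Then for all a, b, c ∈ A: a·0 = 0, a·(b ⊕ c) ≤ a·b ⊕ a·c, a·b ⊖ a·c ≤ a·(b ⊖ c), and a·b ≤ a ∧ b. -/

import Mathlib

/-! Everything follows from `⊖`-distributivity alone: `a·0 = a·(0 ⊖ 0) = a·0 ⊖ a·0 = 0`, so
`x ≤ y` (i.e. `x ⊖ y = 0`) implies `a·x ≤ a·y`; `a·b ⊖ a = a·(b ⊖ u) = 0` gives `a·b ≤ a`; and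
`a·(b ⊕ c) ⊖ a·b ⊖ a·c = a·((b ⊕ c) ⊖ b ⊖ c)` vanishes because `(b ⊕ c) ⊖ b ≤ c`. -/

/-- The data of an MV-algebra: a binary sum, a negation and a zero. -/
structure MVData (A : Type*) where
  add : A → A → A
  neg : A → A
  zero : A

namespace MVData

variable {A : Type*} (m : MVData A)

/-- The top element `u = ¬0`. -/
def unit : A := m.neg m.zero

/-- Truncated difference `x ⊖ y = ¬(¬x ⊕ y)`. -/
def ominus (x y : A) : A := m.neg (m.add (m.neg x) y)

/-- The product `x ⊙ y = ¬(¬x ⊕ ¬y)`. -/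
def odot (x y : A) : A := m.neg (m.add (m.neg x) (m.neg y))

/-- The MV order: `x ≤ y` iff `x ⊖ y = 0`. -/
def le (x y : A) : Prop := m.ominus x y = m.zero

/-- The lattice join `x ∨ y = (x ⊖ y) ⊕ y`. -/
def sup (x y : A) : A := m.add (m.ominus x y) y

/-- The lattice meet `x ∧ y = ¬(¬x ∨ ¬y)`. -/
def inf (x y : A) : A := m.neg (m.sup (m.neg x) (m.neg y))

/-- The MV-algebra axioms: `(A, ⊕, 0)` is a commutative monoid and `¬` satisfies
`¬¬x = x`, `x ⊕ ¬0 = ¬0` and `¬(¬x ⊕ y) ⊕ y = ¬(¬y ⊕ x) ⊕ x`. -/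
structure IsMV : Prop where
  add_assoc : ∀ x y z : A, m.add (m.add x y) z = m.add x (m.add y z)
  add_comm : ∀ x y : A, m.add x y = m.add y x
  add_zero : ∀ x : A, m.add x m.zero = x
  neg_neg : ∀ x : A, m.neg (m.neg x) = x
  add_unit : ∀ x : A, m.add x (m.neg m.zero) = m.neg m.zero
  lukasiewicz : ∀ x y : A,
    m.add (m.neg (m.add (m.neg x) y)) y = m.add (m.neg (m.add (m.neg y) x)) x

end MVData

namespace MVData.IsMV

variable {A : Type*} {m : MVData A}

theorem zero_add (h : m.IsMV) (x : A) : m.add m.zero x = x := by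
  rw [h.add_comm, h.add_zero]

theorem add_unit' (h : m.IsMV) (x : A) : m.add x m.unit = m.unit := h.add_unit x

theorem unit_add (h : m.IsMV) (x : A) : m.add m.unit x = m.unit := by
  rw [h.add_comm, h.add_unit']

theorem neg_unit (h : m.IsMV) : m.neg m.unit = m.zero := h.neg_neg _

theorem neg_add_self (h : m.IsMV) (x : A) : m.add (m.neg x) x = m.unit := by
  simpa only [h.neg_unit, h.zero_add, h.add_unit'] using h.lukasiewicz m.unit x

theorem ominus_self (h : m.IsMV) (x : A) : m.ominus x x = m.zero := by
  rw [MVData.ominus, h.neg_add_self, h.neg_unit]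

theorem le_refl (h : m.IsMV) (x : A) : m.le x x := h.ominus_self x

theorem zero_ominus (h : m.IsMV) (x : A) : m.ominus m.zero x = m.zero := by
  rw [MVData.ominus, ← MVData.unit, h.unit_add, h.neg_unit]

theorem ominus_unit (h : m.IsMV) (x : A) : m.ominus x m.unit = m.zero := by
  rw [MVData.ominus, h.add_unit', h.neg_unit]

theorem eq_zero_of_le_zero (h : m.IsMV) {x : A} (hx : m.le x m.zero) : x = m.zero := by
  rw [MVData.le, MVData.ominus, h.add_zero] at hx
  rw [← h.neg_neg x, hx]

theorem ominus_ominus (h : m.IsMV) (x y z : A) :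
    m.ominus (m.ominus x y) z = m.ominus x (m.add y z) := by
  rw [MVData.ominus, MVData.ominus, MVData.ominus, h.neg_neg, h.add_assoc]

theorem ominus_add_comm (h : m.IsMV) (x y : A) :
    m.add (m.ominus x y) y = m.add (m.ominus y x) x := h.lukasiewicz x y

theorem ominus_le_ominus_right (h : m.IsMV) {x y : A} (z : A) (hxy : m.le x y) :
    m.le (m.ominus x z) (m.ominus y z) := by
  rw [MVData.le, h.ominus_ominus, h.add_comm z, h.ominus_add_comm, h.add_comm,
    ← h.ominus_ominus, hxy, h.zero_ominus]

theorem le_trans (h : m.IsMV) {x y z : A} (hxy : m.le x y) (hyz : m.le y z) : m.le x z := by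
  have hxz := h.ominus_le_ominus_right z hxy
  rw [MVData.le, hyz] at hxz
  exact h.eq_zero_of_le_zero hxz

theorem add_ominus_le (h : m.IsMV) (x y : A) : m.le (m.ominus (m.add x y) y) x := by
  rw [MVData.le, h.ominus_ominus, h.add_comm y, h.ominus_self]

theorem add_le_add_right (h : m.IsMV) {x y : A} (z : A) (hxy : m.le x y) :
    m.le (m.add x z) (m.add y z) := by
  rw [MVData.le, h.add_comm y, ← h.ominus_ominus]
  exact h.le_trans (h.add_ominus_le x z) hxy

theorem sup_le (h : m.IsMV) {x y z : A} (hxz : m.le x z) (hyz : m.le y z) :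
    m.le (m.sup x y) z := by
  have hle := h.add_le_add_right y (h.ominus_le_ominus_right y hxz)
  rwa [h.ominus_add_comm z, hyz, h.zero_add] at hle

theorem neg_le_neg (h : m.IsMV) {x y : A} (hxy : m.le x y) : m.le (m.neg y) (m.neg x) := by
  rwa [MVData.le, MVData.ominus, h.neg_neg, h.add_comm, ← MVData.ominus]

theorem le_inf (h : m.IsMV) {x y z : A} (hxy : m.le x y) (hxz : m.le x z) :
    m.le x (m.inf y z) := by
  simpa only [MVData.inf, h.neg_neg] using
    h.neg_le_neg (h.sup_le (h.neg_le_neg hxy) (h.neg_le_neg hxz))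

end MVData.IsMV

section OminusDistribProduct

variable {A : Type*} {m : MVData A} (mul : A → A → A)

theorem mul_zero_of_mul_ominus (h : m.IsMV)
    (mul_ominus : ∀ a b c : A, mul a (m.ominus b c) = m.ominus (mul a b) (mul a c)) (a : A) :
    mul a m.zero = m.zero := by
  have h_zero := mul_ominus a m.zero m.zero
  rwa [h.ominus_self, h.ominus_self] at h_zero

theorem mul_le_mul_left_of_mul_ominus (h : m.IsMV)
    (mul_ominus : ∀ a b c : A, mul a (m.ominus b c) = m.ominus (mul a b) (mul a c))
    (a : A) {b c : A} (hbc : m.le b c) : m.le (mul a b) (mul a c) := by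
  rw [MVData.le, ← mul_ominus, hbc, mul_zero_of_mul_ominus mul h mul_ominus]

theorem mul_add_le_of_mul_ominus (h : m.IsMV)
    (mul_ominus : ∀ a b c : A, mul a (m.ominus b c) = m.ominus (mul a b) (mul a c))
    (a b c : A) : m.le (mul a (m.add b c)) (m.add (mul a b) (mul a c)) := by
  rw [MVData.le, ← h.ominus_ominus, ← mul_ominus]
  refine mul_le_mul_left_of_mul_ominus mul h mul_ominus a ?_
  simpa only [h.add_comm c] using h.add_ominus_le c b

theorem mul_le_self_of_mul_ominus (h : m.IsMV)
    (mul_unit : ∀ a : A, mul a m.unit = a)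
    (mul_ominus : ∀ a b c : A, mul a (m.ominus b c) = m.ominus (mul a b) (mul a c))
    (a b : A) : m.le (mul a b) a := by
  have h_ominus_unit := mul_ominus a b m.unit
  rw [mul_unit, h.ominus_unit, mul_zero_of_mul_ominus mul h mul_ominus] at h_ominus_unit
  exact h_ominus_unit.symm

end OminusDistribProduct

theorem pmv1_is_pmvf_general {A : Type*} (m : MVData A) (hmv : m.IsMV)
    (mul : A → A → A)
    (mul_comm : ∀ a b : A, mul a b = mul b a)
    (mul_unit : ∀ a : A, mul a m.unit = a)
    (mul_ominus : ∀ a b c : A, mul a (m.ominus b c) = m.ominus (mul a b) (mul a c)) :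
    ∀ a b c : A,
      mul a m.zero = m.zero ∧
      m.le (mul a (m.add b c)) (m.add (mul a b) (mul a c)) ∧
      m.le (m.ominus (mul a b) (mul a c)) (mul a (m.ominus b c)) ∧
      m.le (mul a b) (m.inf a b) := by
  intro a b c
  refine ⟨mul_zero_of_mul_ominus mul hmv mul_ominus a,
    mul_add_le_of_mul_ominus mul hmv mul_ominus a b c, ?_, ?_⟩
  · rw [← mul_ominus]
    exact hmv.le_refl _
  · refine hmv.le_inf (mul_le_self_of_mul_ominus mul hmv mul_unit mul_ominus a b) ?_
    rw [mul_comm]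
    exact mul_le_self_of_mul_ominus mul hmv mul_unit mul_ominus b a

/-- Every unitary PMV-algebra (`PMV_1`) is a `PMV_f`-algebra: if `A`
is an MV-algebra with an associative commutative product satisfying `a·u = a` (with
`u = ¬0`) and `a·(b ⊖ c) = a·b ⊖ a·c`, then `a·0 = 0`, `a·(b ⊕ c) ≤ a·b ⊕ a·c`,
`a·b ⊖ a·c ≤ a·(b ⊖ c)` and `a·b ≤ a ∧ b`. -/
theorem pmv1_is_pmvf {A : Type*} (m : MVData A) (hmv : m.IsMV)
    (mul : A → A → A)
    (mul_assoc : ∀ a b c : A, mul (mul a b) c = mul a (mul b c))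
    (mul_comm : ∀ a b : A, mul a b = mul b a)
    (mul_unit : ∀ a : A, mul a m.unit = a)
    (mul_ominus : ∀ a b c : A, mul a (m.ominus b c) = m.ominus (mul a b) (mul a c)) :
    ∀ a b c : A,
      mul a m.zero = m.zero ∧
      m.le (mul a (m.add b c)) (m.add (mul a b) (mul a c)) ∧
      m.le (m.ominus (mul a b) (mul a c)) (mul a (m.ominus b c)) ∧
      m.le (mul a b) (m.inf a b) :=
  pmv1_is_pmvf_general m hmv mul mul_comm mul_unit mul_ominus
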